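/- arXiv:2408.12691 — 2 statements merged into one kernel-verified Lean document; each statement's English description precedes it below -/
import Mathlib

section
/- Let E ∈ ℝ^{M×N} and v ∈ ℝ^N with v ≠ 0, and let α ≤ β be integers. Then the vector u* with entries u*_i = clamp_{[α,β]}(round((E v)_i / ‖v‖²)) is a global minimizer of ‖E - u vᵀ‖_F² over all u ∈ (ℤ ∩ [α,β])^M. -/
lemma clamp_round_best (x : ℝ) (α β n : ℤ) (hαβ : α ≤ β) (h1 : α ≤ n) (h2 : n ≤ β) :
    |((max α (min (round x) β) : ℤ) : ℝ) - x| ≤ |(n : ℝ) - x| := by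
  have hround : |x - (round x : ℝ)| ≤ 1/2 := abs_sub_round x
  rcases lt_or_ge (round x) α with h | h
  · have hm : max α (min (round x) β) = α := by
      rw [min_eq_left (h.le.trans hαβ)]; exact max_eq_left h.le
    rw [hm]
    have hx : x ≤ (α : ℝ) := by
      have : x ≤ (round x : ℝ) + 1/2 := by
        have := abs_le.mp hround; linarith [this.2]
      have hr : (round x : ℝ) ≤ (α : ℝ) - 1 := by
        exact_mod_cast Int.cast_le.mpr (by omega : round x ≤ α - 1) |>.trans_eq (by push_cast; ring)
      linarith
    have hn : (α : ℝ) ≤ (n : ℝ) := by exact_mod_cast h1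
    rw [abs_of_nonneg (by linarith), abs_of_nonneg (by linarith)]
    linarith
  · rcases lt_or_ge β (round x) with h' | h'
    · have hm : max α (min (round x) β) = β := by
        rw [min_eq_right h'.le]; exact max_eq_right hαβ
      rw [hm]
      have hx : (β : ℝ) ≤ x := by
        have : (round x : ℝ) - 1/2 ≤ x := by
          have := abs_le.mp hround; linarith [this.1]
        have hr : (β : ℝ) + 1 ≤ (round x : ℝ) := by exact_mod_cast (by omega : β + 1 ≤ round x)
        linarith
      have hn : (n : ℝ) ≤ (β : ℝ) := by exact_mod_cast h2
      rw [abs_of_nonpos (by linarith), abs_of_nonpos (by linarith)]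
      linarith
    · have hm : max α (min (round x) β) = round x := by
        rw [min_eq_left h']; exact max_eq_right h
      rw [hm]
      rcases eq_or_ne n (round x) with rfl | hne
      · exact le_refl _
      · have h1' : (1 : ℝ) ≤ |(n : ℝ) - (round x : ℝ)| := by
          have h0 : (1 : ℤ) ≤ |n - round x| := Int.one_le_abs (sub_ne_zero.mpr hne)
          exact_mod_cast h0
        have h2' : |(n:ℝ) - (round x : ℝ)| ≤ |(n:ℝ) - x| + |x - (round x : ℝ)| :=
          abs_sub_le _ _ _
        have h4 : |(round x : ℝ) - x| ≤ 1/2 := by rw [abs_sub_comm]; exact hround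
        linarith

/-- the vector with entries `clamp_{[α,β]}(round((E v)_i / ‖v‖²))`
globally minimizes `‖E - u vᵀ‖_F²` over vectors `u` with integer entries in `[α,β]`. -/
theorem stmt_4 (M N : ℕ) (E : Matrix (Fin M) (Fin N) ℝ) (v : Fin N → ℝ) (hv : v ≠ 0)
    (α β : ℤ) (hαβ : α ≤ β)
    (ustar : Fin M → ℤ)
    (hustar : ∀ i, ustar i =
      max α (min (round ((∑ j, E i j * v j) / (∑ j, (v j) ^ 2))) β)) :
    ∀ u : Fin M → ℤ, (∀ i, α ≤ u i ∧ u i ≤ β) →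
      ∑ i, ∑ j, (E i j - (ustar i : ℝ) * v j) ^ 2 ≤
        ∑ i, ∑ j, (E i j - (u i : ℝ) * v j) ^ 2 := by
  intro u hu
  set s : ℝ := ∑ j, (v j) ^ 2 with hs_def
  have hs : 0 < s := by
    obtain ⟨j, hj⟩ := Function.ne_iff.mp hv
    exact Finset.sum_pos' (fun k _ => sq_nonneg _)
      ⟨j, Finset.mem_univ j, by have hj2 : v j ≠ 0 := hj; positivity⟩
  apply Finset.sum_le_sum
  intro i _
  set c : ℝ := ∑ j, E i j * v j with hc_def
  have key : ∀ t : ℝ, ∑ j, (E i j - t * v j) ^ 2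
      = s * (t - c / s) ^ 2 + ((∑ j, (E i j) ^ 2) - c ^ 2 / s) := by
    intro t
    have h1 : ∑ j, (E i j - t * v j) ^ 2
        = (∑ j, (E i j) ^ 2) - 2 * t * c + t ^ 2 * s := by
      rw [hc_def, hs_def, Finset.mul_sum, Finset.mul_sum, ← Finset.sum_sub_distrib,
        ← Finset.sum_add_distrib]
      exact Finset.sum_congr rfl fun j _ => by ring
    rw [h1]
    field_simp
    ring
  rw [key, key]
  have habs : |((ustar i : ℝ)) - c / s| ≤ |((u i : ℝ)) - c / s| := by
    have := clamp_round_best (c / s) α β (u i) hαβ (hu i).1 (hu i).2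
    rwa [← hustar i] at this
  have hsq : ((ustar i : ℝ) - c / s) ^ 2 ≤ ((u i : ℝ) - c / s) ^ 2 := by
    rw [← sq_abs ((ustar i : ℝ) - c / s), ← sq_abs ((u i : ℝ) - c / s)]
    exact pow_le_pow_left₀ (abs_nonneg _) habs 2
  nlinarith [hs, hsq]
end

section
/- Let α ≤ β be integers and c > 0. For any w ∈ ℝ, the proximal map argmin_{u ∈ ℝ} [δ_{Z_{[α,β]}}(u) + (c/2)(u - w)²] contains the point clamp_{[α,β]}(round(w)), where Z_{[α,β]} = ℤ ∩ [α,β]. -/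
open scoped Classical

lemma clamp_nearest (α β : ℤ) (hαβ : α ≤ β) (w : ℝ) (z : ℤ) (hz1 : α ≤ z) (hz2 : z ≤ β) :
    |((max α (min (round w) β) : ℤ) : ℝ) - w| ≤ |(z : ℝ) - w| := by
  set m := max α (min (round w) β) with hm
  rcases le_or_gt α (round w) with h1 | h1
  · rcases le_or_gt (round w) β with h2 | h2
    · have : m = round w := by omega
      rw [this, abs_sub_comm, abs_sub_comm (z:ℝ)]
      exact round_le w z
    ·
      have hmβ : m = β := by omega
      have hw : (β : ℝ) ≤ w := by
        have := abs_sub_round w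
        have h2' : (β : ℝ) + 1 ≤ (round w : ℝ) := by exact_mod_cast h2
        have : w - round w ≥ -(1/2) := by
          have := abs_le.mp (abs_sub_round w)
          linarith [this.1]
        linarith
      have hzw : (z : ℝ) ≤ w := le_trans (by exact_mod_cast hz2) hw
      rw [hmβ, abs_sub_comm, abs_sub_comm (z:ℝ), abs_of_nonneg (by linarith : (0:ℝ) ≤ w - β),
        abs_of_nonneg (by linarith : (0:ℝ) ≤ w - z)]
      have : (z : ℝ) ≤ β := by exact_mod_cast hz2
      linarith
  · -- round w < α, m = α, w ≤ α
    have hmα : m = α := by omega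
    have hw : w ≤ (α : ℝ) := by
      have h1' : (round w : ℝ) + 1 ≤ (α : ℝ) := by exact_mod_cast h1
      have := abs_le.mp (abs_sub_round w)
      linarith [this.2]
    have hzw : w ≤ (z : ℝ) := le_trans hw (by exact_mod_cast hz1)
    rw [hmα, abs_of_nonneg (by linarith : (0:ℝ) ≤ (α:ℝ) - w) , abs_of_nonneg (by linarith : (0:ℝ) ≤ (z:ℝ) - w)]
    have : (α : ℝ) ≤ z := by exact_mod_cast hz1
    linarith

/-- the proximal map of the indicator of `Z_{[α,β]} = ℤ ∩ [α,β]`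
contains `clamp_{[α,β]}(round w)`: this point globally minimizes
`u ↦ δ_{Z_{[α,β]}}(u) + (c/2)(u - w)²` over `u ∈ ℝ`. -/
theorem stmt_8 (α β : ℤ) (hαβ : α ≤ β) (c : ℝ) (hc : 0 < c) (w : ℝ)
    (Zab : Set ℝ) (hZab : Zab = {x : ℝ | ∃ z : ℤ, α ≤ z ∧ z ≤ β ∧ x = (z : ℝ)})
    (F : ℝ → EReal)
    (hF : ∀ u, F u = if u ∈ Zab then (((c / 2) * (u - w) ^ 2 : ℝ) : EReal) else ⊤)
    (p : ℝ) (hp : p = ((max α (min (round w) β) : ℤ) : ℝ)) :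
    ∀ u : ℝ, F p ≤ F u := by
  intro u
  rw [hF, hF]
  have hpZ : p ∈ Zab := by
    rw [hZab, hp]
    exact ⟨max α (min (round w) β), le_max_left _ _, by omega, rfl⟩
  rw [if_pos hpZ]
  by_cases hu : u ∈ Zab
  · rw [if_pos hu]
    rw [hZab] at hu
    obtain ⟨z, hz1, hz2, rfl⟩ := hu
    rw [EReal.coe_le_coe_iff]
    have h := clamp_nearest α β hαβ w z hz1 hz2
    have hsq : (p - w)^2 ≤ ((z:ℝ) - w)^2 := by
      rw [← sq_abs, ← sq_abs ((z:ℝ) - w)]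
      rw [hp]
      exact pow_le_pow_left₀ (abs_nonneg _) h 2
    nlinarith
  · rw [if_neg hu]; exact le_top
end
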